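/- For every b ∈ E and every 𝔥 ∈ U_{b,b}: C_𝔥 · C_𝔥 = (image in F of the integer k_𝔥) · C_𝔥. In particular, if the center Z(T) = {M ∈ T : MN = NM for all N ∈ T} is a semisimple ring, then for every i ∈ E and every 𝔧 ∈ U_{i,i} the integer k_𝔧 does not vanish in F. -/

import Mathlib

open scoped Classical

namespace GDScheme

variable {n : ℕ}

/-- The vertex set of the direct product of the group divisible schemes
`GD(ℓ i, m i)`. -/
abbrev Pt (ℓ m : Fin n → ℕ) : Type := ∀ i : Fin n, Fin (ℓ i) × Fin (m i)

/-- The index set `E` of the scheme: `n`-tuples with entries in `{0,1,2}`. -/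
abbrev Lbl (n : ℕ) : Type := Fin n → Fin 3

/-- The relations of a single group divisible scheme. -/
def rel1 {a b : ℕ} (j : Fin 3) (u v : Fin a × Fin b) : Prop :=
  if j = 0 then u = v
  else if j = 1 then u ≠ v ∧ u.1 = v.1
  else u.1 ≠ v.1

/-- The relation `R_g` of the direct product scheme. -/
def Rel (ℓ m : Fin n → ℕ) (g : Lbl n) (y z : Pt ℓ m) : Prop :=
  ∀ i : Fin n, rel1 (g i) (y i) (z i)

/-- The adjacency matrix `A_g`. -/
noncomputable def Amat (F : Type) [Field F] (ℓ m : Fin n → ℕ) (g : Lbl n) :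
    Matrix (Pt ℓ m) (Pt ℓ m) F :=
  fun y z => if Rel ℓ m g y z then 1 else 0

/-- The dual idempotent `E*_g` with respect to the base point `x`. -/
noncomputable def Estar (F : Type) [Field F] (ℓ m : Fin n → ℕ) (x : Pt ℓ m) (g : Lbl n) :
    Matrix (Pt ℓ m) (Pt ℓ m) F :=
  Matrix.diagonal fun y => if Rel ℓ m g x y then 1 else 0

/-- The Terwilliger `F`-algebra with respect to the base point `x`. -/
noncomputable def Talg (F : Type) [Field F] (ℓ m : Fin n → ℕ) (x : Pt ℓ m) :
    Subalgebra F (Matrix (Pt ℓ m) (Pt ℓ m) F) :=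
  Algebra.adjoin F (Set.range (Amat F ℓ m) ∪ Set.range (Estar F ℓ m x))

/-- `𝕘_j = {i : g i = j}`. -/
def lset (g : Lbl n) (j : Fin 3) : Finset (Fin n) :=
  Finset.univ.filter fun i => g i = j

/-- `V^• = {a ∈ V : ℓ a > 2}`. -/
def bullet (ℓ : Fin n → ℕ) (V : Finset (Fin n)) : Finset (Fin n) :=
  V.filter fun a => 2 < ℓ a

/-- `V^∘ = {a ∈ V : m a > 2}`. -/
def circ (m : Fin n → ℕ) (V : Finset (Fin n)) : Finset (Fin n) :=
  V.filter fun a => 2 < m a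

/-- `(g, h, i) ∈ P`. -/
def MemP (ℓ m : Fin n → ℕ) (g h i : Lbl n) : Prop :=
  (lset g 0 ∩ lset h 1 ∪ lset g 1 ∩ lset h 0) ⊆ lset i 1 ∧
  lset i 1 ⊆
    (lset g 0 ∩ lset h 1 ∪ lset g 1 ∩ lset h 0 ∪ circ m (lset g 1 ∩ lset h 1) ∪
      lset g 2 ∩ lset h 2) ∧
  ((lset g 2 \ lset h 2) ∪ (lset h 2 \ lset g 2)) ⊆ lset i 2 ∧
  lset i 2 ⊆ ((lset g 2 \ lset h 2) ∪ (lset h 2 \ lset g 2) ∪ bullet ℓ (lset g 2 ∩ lset h 2))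

/-- Triples of subsets of `{1, …, n}`. -/
abbrev Trip (n : ℕ) : Type := Finset (Fin n) × Finset (Fin n) × Finset (Fin n)

/-- `𝔠 ∈ U_{g,h}`. -/
def MemU (ℓ m : Fin n → ℕ) (g h : Lbl n) (c : Trip n) : Prop :=
  c.1 ⊆ circ m (lset g 1 ∩ lset h 1) ∧ c.2.1 ⊆ bullet ℓ (lset g 2 ∩ lset h 2) ∧
  c.2.1 ⊆ c.2.2 ∧ c.2.2 ⊆ lset g 2 ∩ lset h 2

/-- `a ∈ U_{g,h,𝔠}`. -/
def MemUc (ℓ m : Fin n → ℕ) (g h : Lbl n) (c : Trip n) (a : Lbl n) : Prop :=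
  MemP ℓ m g h a ∧
  lset a 1 ∩ circ m (lset g 1 ∩ lset h 1) ⊆ c.1 ∧
  lset a 2 ∩ bullet ℓ (lset g 2 ∩ lset h 2) ⊆ c.2.1 ∧
  lset a 1 ∩ (lset g 2 ∩ lset h 2) ⊆ c.2.2

/-- The matrix `B_{g,h,𝔠} = Σ_{a ∈ U_{g,h,𝔠}} E*_g A_a E*_h`. -/
noncomputable def Bmat (F : Type) [Field F] (ℓ m : Fin n → ℕ) (x : Pt ℓ m)
    (g h : Lbl n) (c : Trip n) : Matrix (Pt ℓ m) (Pt ℓ m) F :=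
  ∑ a ∈ Finset.univ.filter (fun a : Lbl n => MemUc ℓ m g h c a),
    Estar F ℓ m x g * Amat F ℓ m a * Estar F ℓ m x h

/-- `k_{(U,V,W)}`. -/
def kUVW (ℓ m : Fin n → ℕ) (U V W : Finset (Fin n)) : ℕ :=
  (∏ j ∈ U, (m j - 1)) * (∏ k ∈ V, (ℓ k - 1) * m k) * ∏ l ∈ W \ V, m l

/-- `k_𝔠` for a triple of sets `𝔠`. -/
def kTrip (ℓ m : Fin n → ℕ) (c : Trip n) : ℕ := kUVW ℓ m c.1 c.2.1 c.2.2

/-- `k_g` for `g ∈ E` (the valency of `R_g`). -/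
def kE (ℓ m : Fin n → ℕ) (g : Lbl n) : ℕ :=
  (∏ h ∈ lset g 1, (m h - 1)) * ∏ i ∈ lset g 2, (ℓ i - 1) * m i

/-- `k_{[g,h,i]}`. -/
def kBr (ℓ m : Fin n → ℕ) (g h i : Lbl n) : ℕ :=
  (∏ a ∈ lset h 1 \ (lset g 1 ∪ lset i 1), (m a - 1)) *
    ∏ a ∈ lset h 2 \ (lset g 2 ∪ lset i 2), (ℓ a - 1) * m a

/-- `𝔧 ∩ 𝔨` for triples of sets. -/
def interT (c d : Trip n) : Trip n := (c.1 ∩ d.1, c.2.1 ∩ d.2.1, c.2.2 ∩ d.2.2)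

/-- `𝔧 ∪ 𝔨` for triples of sets. -/
def unionT (c d : Trip n) : Trip n := (c.1 ∪ d.1, c.2.1 ∪ d.2.1, c.2.2 ∪ d.2.2)

/-- `𝔧 ∖ i` for a triple of sets `𝔧` and `i ∈ E`. -/
def sdiffT (c : Trip n) (i : Lbl n) : Trip n :=
  (c.1 \ lset i 1, c.2.1 \ lset i 2, c.2.2 \ lset i 2)

/-- `i ∩ 𝔧` for `i ∈ E` and a triple of sets `𝔧`. -/
def capT (i : Lbl n) (c : Trip n) : Trip n :=
  (lset i 1 ∩ c.1, lset i 2 ∩ c.2.1, lset i 2 ∩ c.2.2)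

/-- The triple `(g,h,i,𝔧,𝔨) ∈ U_{g,i}`. -/
def combT (ℓ m : Fin n → ℕ) (g h i : Lbl n) (j k : Trip n) : Trip n :=
  (circ m (lset g 1 ∩ lset i 1) \ lset h 1 ∪ lset g 1 ∩ lset i 1 ∩ (j.1 ∪ k.1),
   bullet ℓ (lset g 2 ∩ lset i 2) \ lset h 2 ∪ lset g 2 ∩ lset i 2 ∩ (j.2.1 ∪ k.2.1),
   (lset g 2 ∩ lset i 2) \ lset h 2 ∪ lset g 2 ∩ lset i 2 ∩ (j.2.2 ∪ k.2.2))

/-- The central elements `C_𝔥 = Σ_{i ∈ E} k_{𝔥∖i} • B_{i,i,i∩𝔥}`. -/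
noncomputable def Cmat (F : Type) [Field F] (ℓ m : Fin n → ℕ) (x : Pt ℓ m) (c : Trip n) :
    Matrix (Pt ℓ m) (Pt ℓ m) F :=
  ∑ i : Lbl n, (kTrip ℓ m (sdiffT c i) : F) • Bmat F ℓ m x i i (capT i c)

/-- Componentwise inclusion `⪯` of triples of sets. -/
def leT (c d : Trip n) : Prop := c.1 ⊆ d.1 ∧ c.2.1 ⊆ d.2.1 ∧ c.2.2 ⊆ d.2.2

/-- `|𝔠| = |S₁| + |S₂| + |S₃|`. -/
def cardT (c : Trip n) : ℕ := c.1.card + c.2.1.card + c.2.2.card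

/-- The triple `(g,h;𝔦)`. -/
def semiT (ℓ m : Fin n → ℕ) (g h : Lbl n) (c : Trip n) : Trip n :=
  (circ m (lset g 1 ∩ lset h 1), bullet ℓ c.2.2, lset g 2 ∩ lset h 2)

/-- The matrix `D_{g,h,𝔦}` (summing over all `𝔞 ∈ U_{g,h}` with `𝔦 ⪯ 𝔞 ⪯ (g,h;𝔦)` and `k_𝔞`
nonvanishing, with sign `(-1)^(|𝔞|-|𝔦|)`; this combines the double sum over
`j` and `𝔨 ∈ U_{g,h,𝔦,j}`). -/
noncomputable def Dmat (F : Type) [Field F] (ℓ m : Fin n → ℕ) (x : Pt ℓ m)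
    (g h : Lbl n) (c : Trip n) : Matrix (Pt ℓ m) (Pt ℓ m) F :=
  ∑ a ∈ Finset.univ.filter (fun a : Trip n =>
      MemU ℓ m g h a ∧ leT c a ∧ leT a (semiT ℓ m g h c) ∧ (kTrip ℓ m a : F) ≠ 0),
    ((-1 : F) ^ (cardT a - cardT c) * (kBr ℓ m g h g : F)⁻¹ * (kTrip ℓ m a : F)⁻¹) •
      Bmat F ℓ m x g h a

/-- Every product of `h` elements of `S` vanishes. -/
def ProdZero {α : Type} [Ring α] (S : Set α) (h : ℕ) : Prop :=
  ∀ f : Fin h → α, (∀ i, f i ∈ S) → (List.ofFn f).prod = 0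

/-- The corner `E*_g T E*_g` as a set of matrices. -/
def CornerSet (F : Type) [Field F] (ℓ m : Fin n → ℕ) (x : Pt ℓ m) (g : Lbl n) :
    Set (Matrix (Pt ℓ m) (Pt ℓ m) F) :=
  {N | ∃ M ∈ Talg F ℓ m x, N = Estar F ℓ m x g * M * Estar F ℓ m x g}

/-- The center `Z(T)` as a set of matrices. -/
def CenterSet (F : Type) [Field F] (ℓ m : Fin n → ℕ) (x : Pt ℓ m) :
    Set (Matrix (Pt ℓ m) (Pt ℓ m) F) :=
  {M | M ∈ Talg F ℓ m x ∧ ∀ N ∈ Talg F ℓ m x, M * N = N * M}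

/-- The Jacobson radical of `T`, defined (as in the paper, for a finite-dimensional
algebra) as the largest nilpotent two-sided ideal, i.e. the sup of all nilpotent
two-sided ideals of `T`. -/
noncomputable def RadT (F : Type) [Field F] (ℓ m : Fin n → ℕ) (x : Pt ℓ m) :
    Submodule F (Matrix (Pt ℓ m) (Pt ℓ m) F) :=
  sSup {J | (J : Set (Matrix (Pt ℓ m) (Pt ℓ m) F)) ⊆ (Talg F ℓ m x : Set _) ∧
    (∀ a ∈ J, ∀ t ∈ Talg F ℓ m x, a * t ∈ J ∧ t * a ∈ J) ∧
    ∃ h, ProdZero (J : Set (Matrix (Pt ℓ m) (Pt ℓ m) F)) h}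

/-- `(g, h, 𝔠) ∈ 𝔻`. -/
def MemD (F : Type) [Field F] (ℓ m : Fin n → ℕ) (t : Lbl n × Lbl n × Trip n) : Prop :=
  MemU ℓ m t.1 t.2.1 t.2.2 ∧
    ((kBr ℓ m t.1 t.2.1 t.1 * kBr ℓ m t.2.1 t.1 t.2.1 * kTrip ℓ m t.2.2 : ℕ) : F) ≠ 0

/-- The invariant classifying the equivalence `∼` on `𝔻`. -/
def keyD (ℓ m : Fin n → ℕ) (t : Lbl n × Lbl n × Trip n) : Trip n :=
  (circ m (lset t.1 1 ∩ lset t.2.1 1) \ t.2.2.1,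
   bullet ℓ (lset t.1 2 ∩ lset t.2.1 2) \ t.2.2.2.1,
   (lset t.1 2 ∩ lset t.2.1 2) \ t.2.2.2.2)

/-- The equivalence relation `∼` on `𝔻`. -/
def DSetoid (F : Type) [Field F] (ℓ m : Fin n → ℕ) : Setoid {t : Lbl n × Lbl n × Trip n // MemD F ℓ m t} :=
  ⟨fun s t => keyD ℓ m s.1 = keyD ℓ m t.1, ⟨fun _ => rfl, Eq.symm, Eq.trans⟩⟩

/-- The set of `∼`-equivalence classes of `𝔻`. -/
def ClassIdx (F : Type) [Field F] (ℓ m : Fin n → ℕ) : Type :=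
  Quotient (DSetoid F ℓ m)

/-- `|𝔻(c)|` for an equivalence class `c`. -/
noncomputable def dClass (F : Type) [Field F] (ℓ m : Fin n → ℕ) (c : ClassIdx F ℓ m) : ℕ :=
  Nat.card {a : Lbl n // ∃ (b : Trip n) (hb : MemD F ℓ m (a, a, b)),
    Quotient.mk (DSetoid F ℓ m) ⟨(a, a, b), hb⟩ = c}





/-- type of pair -/
def tau {A B : ℕ} (u v : Fin A × Fin B) : Fin 3 :=
  if u = v then 0 else if u.1 = v.1 then 1 else 2

variable {A B : ℕ}

lemma tau_eq_zero {u v : Fin A × Fin B} : tau u v = 0 ↔ u = v := by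
  unfold tau; split_ifs with h1 h2 <;> simp_all

lemma tau_eq_one {u v : Fin A × Fin B} : tau u v = 1 ↔ u ≠ v ∧ u.1 = v.1 := by
  unfold tau; split_ifs with h1 h2 <;> simp_all

lemma tau_eq_two {u v : Fin A × Fin B} : tau u v = 2 ↔ u.1 ≠ v.1 := by
  unfold tau; split_ifs with h1 h2 <;> simp_all

lemma tau_comm (u v : Fin A × Fin B) : tau u v = tau v u := by
  unfold tau; split_ifs with h1 h2 h3 h4 h5 <;> simp_all [eq_comm]



variable {A B : ℕ} (F : Type) [Field F]

/-- the block label of a local `C`-matrix -/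
def Gflag (s1 s3 : Bool) : Fin 3 := if s1 then 1 else if s3 then 2 else 0

/-- the local eigenvalue/valency -/
noncomputable def alphaF (s1 s2 s3 : Bool) (A B : ℕ) : F :=
  if s1 then (B:F)-1 else if s2 then ((A:F)-1)*(B:F) else if s3 then (B:F) else 1

/-- the local entry function of the `C`-matrices -/
noncomputable def cloc (s1 s2 s3 : Bool) (x u v : Fin A × Fin B) : F :=
  if tau x u = Gflag s1 s3 ∧ tau x v = Gflag s1 s3 then
    (if s3 ∧ ¬ s2 ∧ ¬ s1 then (if u.1 = v.1 then (1:F) else 0) else 1)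
  else alphaF F s1 s2 s3 A B * (if u = v then 1 else 0)

section sums

lemma sum_delta (u : Fin A × Fin B) (h : Fin A × Fin B → F) :
    ∑ w, (if u = w then h w else 0) = h u := by
  simp

lemma sum_delta' (u : Fin A × Fin B) (h : Fin A × Fin B → F) :
    ∑ w, (if w = u then h w else 0) = h u := by
  simp

lemma sum_one : ∑ _w : Fin A × Fin B, (1:F) = (A:F) * (B:F) := by
  simp [Finset.card_univ, mul_comm]

lemma sum_fst (p : Fin A) (c : F) :
    ∑ w : Fin A × Fin B, (if w.1 = p then c else 0) = (B:F) * c := by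
  rw [Fintype.sum_prod_type]
  have : ∀ a : Fin A, (∑ _b : Fin B, if a = p then c else 0) = (if a = p then (B:F)*c else 0) := by
    intro a; by_cases h : a = p <;> simp [h, mul_comm]
  rw [Finset.sum_congr rfl fun a _ => this a]
  simp

lemma sum_count0 (x : Fin A × Fin B) : ∑ w, (if tau x w = 0 then (1:F) else 0) = 1 := by
  simp [tau_eq_zero]

lemma sum_count1 (x : Fin A × Fin B) :
    ∑ w, (if tau x w = 1 then (1:F) else 0) = (B:F) - 1 := by
  have h : ∀ w : Fin A × Fin B, (if tau x w = 1 then (1:F) else 0)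
      = (if w.1 = x.1 then (1:F) else 0) - (if x = w then 1 else 0) := by
    intro w
    by_cases h1 : x = w
    · subst h1; simp [tau_eq_one]
    · by_cases h2 : w.1 = x.1 <;> simp [tau_eq_one, h1, h2, eq_comm, Ne.symm]
  rw [Finset.sum_congr rfl fun w _ => h w, Finset.sum_sub_distrib, sum_fst, sum_delta]
  ring

lemma sum_count2 (x : Fin A × Fin B) :
    ∑ w, (if tau x w = 2 then (1:F) else 0) = ((A:F)-1) * (B:F) := by
  have h : ∀ w : Fin A × Fin B, (if tau x w = 2 then (1:F) else 0)
      = 1 - (if w.1 = x.1 then (1:F) else 0) := by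
    intro w
    by_cases h2 : w.1 = x.1 <;> simp [tau_eq_two, h2, eq_comm, Ne.symm]
  rw [Finset.sum_congr rfl fun w _ => h w, Finset.sum_sub_distrib, sum_one, sum_fst]
  ring

lemma sum_fst_fst (p q : Fin A) (c : F) :
    ∑ w : Fin A × Fin B, (if w.1 = p ∧ w.1 = q then c else 0)
      = (B:F) * (if p = q then c else 0) := by
  by_cases hpq : p = q
  · subst hpq
    simp only [and_self, if_pos rfl]
    exact sum_fst F p c
  · simp only [if_neg hpq, mul_zero]
    rw [Finset.sum_eq_zero]
    intro w _
    by_cases h : w.1 = p <;> by_cases h' : w.1 = q <;> simp_all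

lemma sum_block1_fv (x v : Fin A × Fin B) :
    ∑ w, (if tau x w = 1 then (if w.1 = v.1 then (1:F) else 0) else 0)
      = ((B:F)-1) * (if x.1 = v.1 then 1 else 0) := by
  have h : ∀ w : Fin A × Fin B, (if tau x w = 1 then (if w.1 = v.1 then (1:F) else 0) else 0)
      = (if x.1 = v.1 then (1:F) else 0) * (if tau x w = 1 then (1:F) else 0) := by
    intro w
    by_cases h1 : tau x w = 1
    · have : x.1 = w.1 := (tau_eq_one.1 h1).2
      by_cases h2 : x.1 = v.1 <;> simp [h1, h2, ← this] <;> tauto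
    · simp [h1]
  rw [Finset.sum_congr rfl fun w _ => h w, ← Finset.mul_sum, sum_count1]
  ring

lemma sum_block2_fv (x v : Fin A × Fin B) :
    ∑ w, (if tau x w = 2 then (if w.1 = v.1 then (1:F) else 0) else 0)
      = if x.1 = v.1 then 0 else (B:F) := by
  by_cases h2 : x.1 = v.1
  · rw [if_pos h2, Finset.sum_eq_zero]
    intro w _
    by_cases ha : tau x w = 2
    · rw [if_pos ha, if_neg (fun h : w.1 = v.1 => (tau_eq_two.1 ha) (h2.trans h.symm))]
    · simp [ha]
  · rw [if_neg h2]
    have h : ∀ w : Fin A × Fin B, (if tau x w = 2 then (if w.1 = v.1 then (1:F) else 0) else 0)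
        = (if w.1 = v.1 then (1:F) else 0) := by
      intro w
      by_cases hw : w.1 = v.1
      · have : tau x w = 2 := tau_eq_two.2 (by rw [hw]; exact h2)
        simp [this, hw]
      · simp [hw]
    rw [Finset.sum_congr rfl fun w _ => h w, sum_fst, mul_one]

lemma sum_block2_f (x u v : Fin A × Fin B) (hu : x.1 ≠ u.1) :
    ∑ w, (if tau x w = 2 then (if u.1 = w.1 then (1:F) else 0) * (if w.1 = v.1 then 1 else 0) else 0)
      = (B:F) * (if u.1 = v.1 then 1 else 0) := by
  have h : ∀ w : Fin A × Fin B,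
      (if tau x w = 2 then (if u.1 = w.1 then (1:F) else 0) * (if w.1 = v.1 then 1 else 0) else 0)
      = (if w.1 = u.1 ∧ w.1 = v.1 then (1:F) else 0) := by
    intro w
    by_cases hw : w.1 = u.1
    · have : tau x w = 2 := tau_eq_two.2 (by rw [hw]; exact hu)
      by_cases hv : w.1 = v.1 <;> simp [this, hw.symm, hv, eq_comm]
    · have hne : ¬ u.1 = w.1 := fun h => hw h.symm
      by_cases ha : tau x w = 2 <;> simp [ha, hw, hne]
  rw [Finset.sum_congr rfl fun w _ => h w, sum_fst_fst]

lemma sum_block2_f1 (x u : Fin A × Fin B) (hu : x.1 ≠ u.1) :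
    ∑ w, (if tau x w = 2 then (if u.1 = w.1 then (1:F) else 0) else 0) = (B:F) := by
  have h : ∀ w : Fin A × Fin B,
      (if tau x w = 2 then (if u.1 = w.1 then (1:F) else 0) else 0)
      = (if w.1 = u.1 then (1:F) else 0) := by
    intro w
    by_cases hw : w.1 = u.1
    · have : tau x w = 2 := tau_eq_two.2 (by rw [hw]; exact hu)
      simp [this, hw.symm]
    · have hne : ¬ u.1 = w.1 := fun h => hw h.symm
      by_cases ha : tau x w = 2 <;> simp [ha, hw, hne]
  rw [Finset.sum_congr rfl fun w _ => h w, sum_fst, mul_one]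

end sums

section clocLemmas

variable (s1 s2 s3 : Bool) (x u v : Fin A × Fin B)

lemma cloc_comm : cloc F s1 s2 s3 x u v = cloc F s1 s2 s3 x v u := by
  unfold cloc
  have e1 : (if u = v then (1:F) else 0) = (if v = u then 1 else 0) := by
    by_cases h : u = v
    · simp [h]
    · simp [h, Ne.symm h]
  have e2 : (if u.1 = v.1 then (1:F) else 0) = (if v.1 = u.1 then 1 else 0) := by
    by_cases h : u.1 = v.1
    · simp [h]
    · simp [h, Ne.symm h]
  by_cases h1 : tau x u = Gflag s1 s3 <;> by_cases h2 : tau x v = Gflag s1 s3 <;>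
    simp [h1, h2, e1, e2]

lemma cloc_off (hu : tau x u ≠ Gflag s1 s3) (w : Fin A × Fin B) :
    cloc F s1 s2 s3 x u w = alphaF F s1 s2 s3 A B * (if u = w then 1 else 0) := by
  unfold cloc; rw [if_neg (by tauto)]

lemma cloc_off' (hv : tau x v ≠ Gflag s1 s3) (w : Fin A × Fin B) :
    cloc F s1 s2 s3 x w v = alphaF F s1 s2 s3 A B * (if v = w then 1 else 0) := by
  rw [cloc_comm]; exact cloc_off F s1 s2 s3 x v hv w

lemma cloc_on (hu : tau x u = Gflag s1 s3) (w : Fin A × Fin B) :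
    cloc F s1 s2 s3 x u w = (if tau x w = Gflag s1 s3 then
      (if s3 ∧ ¬ s2 ∧ ¬ s1 then (if u.1 = w.1 then (1:F) else 0) else 1) else 0) := by
  unfold cloc
  by_cases hw : tau x w = Gflag s1 s3
  · rw [if_pos ⟨hu, hw⟩, if_pos hw]
  · rw [if_neg (by tauto), if_neg hw]
    have : u ≠ w := fun h => hw (h ▸ hu)
    simp [this]

lemma cloc_nonzero_types (h : cloc F s1 s2 s3 x u v ≠ 0) : tau x u = tau x v := by
  unfold cloc at h
  by_cases h1 : tau x u = Gflag s1 s3 ∧ tau x v = Gflag s1 s3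
  · rw [h1.1, h1.2]
  · rw [if_neg h1] at h
    have : u = v := by
      by_contra hne; simp [hne] at h
    rw [this]

end clocLemmas


section mainLocal

variable {A B : ℕ} (F : Type) [Field F] (s1 s2 s3 : Bool)

lemma ite_mul_ite' {P : Prop} [Decidable P] (a b : F) :
    (if P then a else 0) * (if P then b else 0) = (if P then a * b else 0) := by
  by_cases h : P <;> simp [h]

lemma cloc_rowsum (hs23 : s2 = true → s3 = true) (x u : Fin A × Fin B) :
    ∑ w, cloc F s1 s2 s3 x u w = alphaF F s1 s2 s3 A B := by
  by_cases hu : tau x u = Gflag s1 s3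
  · rw [Finset.sum_congr rfl fun w _ => cloc_on F s1 s2 s3 x u hu w]
    rcases s1 <;> rcases s2 <;> rcases s3 <;>
      simp only [Gflag, alphaF, Bool.false_eq_true, Bool.true_eq_false, and_true, true_and,
        and_false, false_and, not_true, not_false_iff, if_true, if_false, ite_true, ite_false,
        mul_one, one_mul, and_self, Bool.not_true, Bool.not_false, not_false_eq_true] at hu ⊢
    · exact sum_count0 F x
    · exact sum_block2_f1 F x u (tau_eq_two.1 hu)
    · exact (Bool.false_ne_true (hs23 rfl)).elim
    · exact sum_count2 F x
    · exact sum_count1 F x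
    · exact sum_count1 F x
    · exact (Bool.false_ne_true (hs23 rfl)).elim
    · exact sum_count1 F x
  · rw [Finset.sum_congr rfl fun w _ => cloc_off F s1 s2 s3 x u hu w, ← Finset.mul_sum]
    simp

lemma cloc_colsum (hs23 : s2 = true → s3 = true) (x v : Fin A × Fin B) :
    ∑ w, cloc F s1 s2 s3 x w v = alphaF F s1 s2 s3 A B := by
  rw [Finset.sum_congr rfl fun w _ => cloc_comm F s1 s2 s3 x w v]
  exact cloc_rowsum F s1 s2 s3 hs23 x v

lemma cloc_conv (hs23 : s2 = true → s3 = true) (x u v : Fin A × Fin B) :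
    ∑ w, cloc F s1 s2 s3 x u w * cloc F s1 s2 s3 x w v
      = alphaF F s1 s2 s3 A B * cloc F s1 s2 s3 x u v := by
  by_cases hu : tau x u = Gflag s1 s3
  · by_cases hv : tau x v = Gflag s1 s3
    · -- main case
      have hpt : ∀ w, cloc F s1 s2 s3 x u w * cloc F s1 s2 s3 x w v
          = (if tau x w = Gflag s1 s3 then
              (if s3 ∧ ¬ s2 ∧ ¬ s1 then (if u.1 = w.1 then (1:F) else 0) * (if w.1 = v.1 then 1 else 0) else 1)
            else 0) := by
        intro w
        rw [cloc_on F s1 s2 s3 x u hu w, cloc_comm F s1 s2 s3 x w v,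
          cloc_on F s1 s2 s3 x v hv w, ite_mul_ite']
        simp only [Bool.not_eq_true]
        by_cases hw : tau x w = Gflag s1 s3
        · rw [if_pos hw, if_pos hw]
          by_cases hb : s3 = true ∧ s2 = false ∧ s1 = false
          · simp only [if_pos hb]
            by_cases h : v.1 = w.1 <;> by_cases h' : u.1 = w.1 <;>
              simp_all [eq_comm]
          · simp only [if_neg hb, mul_one]
        · simp [hw]
      rw [Finset.sum_congr rfl fun w _ => hpt w,
        cloc_on F s1 s2 s3 x u hu v, if_pos hv]
      rcases s1 <;> rcases s2 <;> rcases s3 <;>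
        simp only [Gflag, alphaF, Bool.false_eq_true, Bool.true_eq_false, and_true, true_and,
          and_false, false_and, not_true, not_false_iff, if_true, if_false, ite_true, ite_false,
          mul_one, one_mul, and_self, Bool.not_true, Bool.not_false, not_false_eq_true] at hu hv ⊢
      · exact sum_count0 F x
      · exact sum_block2_f F x u v (tau_eq_two.1 hu)
      · exact (Bool.false_ne_true (hs23 rfl)).elim
      · exact sum_count2 F x
      · exact sum_count1 F x
      · exact sum_count1 F x
      · exact (Bool.false_ne_true (hs23 rfl)).elim
      · exact sum_count1 F x
    · have hpt : ∀ w, cloc F s1 s2 s3 x u w * cloc F s1 s2 s3 x w v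
          = (if v = w then cloc F s1 s2 s3 x u w * alphaF F s1 s2 s3 A B else 0) := by
        intro w
        rw [cloc_off' F s1 s2 s3 x v hv w]
        by_cases h : v = w <;> simp [h] <;> ring
      rw [Finset.sum_congr rfl fun w _ => hpt w, sum_delta, mul_comm]
  · have hpt : ∀ w, cloc F s1 s2 s3 x u w * cloc F s1 s2 s3 x w v
        = (if u = w then alphaF F s1 s2 s3 A B * cloc F s1 s2 s3 x w v else 0) := by
      intro w
      rw [cloc_off F s1 s2 s3 x u hu w]
      by_cases h : u = w <;> simp [h] <;> ring
    rw [Finset.sum_congr rfl fun w _ => hpt w, sum_delta]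

end mainLocal



section commLocal

variable {A B : ℕ} (F : Type) [Field F]

lemma sum_count0_f (x q : Fin A × Fin B) :
    ∑ w, (if tau x w = 0 then (if w.1 = q.1 then (1:F) else 0) else 0)
      = (if x.1 = q.1 then (1:F) else 0) := by
  have h : ∀ w : Fin A × Fin B, (if tau x w = 0 then (if w.1 = q.1 then (1:F) else 0) else 0)
      = (if x = w then (if w.1 = q.1 then (1:F) else 0) else 0) := by
    intro w
    by_cases h : x = w
    · rw [if_pos (tau_eq_zero.2 h), if_pos h]
    · rw [if_neg (fun hh => h (tau_eq_zero.1 hh)), if_neg h]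
  rw [Finset.sum_congr rfl fun w _ => h w, sum_delta]

variable (s1 s2 s3 : Bool)

/-- evaluation of `∑ w, cloc x p w * f w q` in the non-block case -/
lemma S_off (x p q : Fin A × Fin B) (hp : tau x p ≠ Gflag s1 s3) :
    ∑ w, cloc F s1 s2 s3 x p w * (if w.1 = q.1 then (1:F) else 0)
      = alphaF F s1 s2 s3 A B * (if p.1 = q.1 then 1 else 0) := by
  have h : ∀ w : Fin A × Fin B, cloc F s1 s2 s3 x p w * (if w.1 = q.1 then (1:F) else 0)
      = (if p = w then alphaF F s1 s2 s3 A B * (if w.1 = q.1 then (1:F) else 0) else 0) := by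
    intro w
    rw [cloc_off F s1 s2 s3 x p hp w]
    by_cases h : p = w <;> simp [h] <;> ring
  rw [Finset.sum_congr rfl fun w _ => h w, sum_delta]

lemma S_on (x p q : Fin A × Fin B) (hp : tau x p = Gflag s1 s3) :
    ∑ w, cloc F s1 s2 s3 x p w * (if w.1 = q.1 then (1:F) else 0)
      = ∑ w, (if tau x w = Gflag s1 s3 then
          (if s3 = true ∧ s2 = false ∧ s1 = false then (if p.1 = w.1 then (1:F) else 0) else 1)
            * (if w.1 = q.1 then (1:F) else 0) else 0) := by
  apply Finset.sum_congr rfl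
  intro w _
  rw [cloc_on F s1 s2 s3 x p hp w]
  simp only [Bool.not_eq_true]
  by_cases hw : tau x w = Gflag s1 s3 <;> simp [hw]

lemma cloc_mul_f (hs23 : s2 = true → s3 = true) (x u v : Fin A × Fin B) :
    ∑ w, cloc F s1 s2 s3 x u w * (if w.1 = v.1 then (1:F) else 0)
      = ∑ w, (if u.1 = w.1 then (1:F) else 0) * cloc F s1 s2 s3 x w v := by
  have swap : ∑ w, (if u.1 = w.1 then (1:F) else 0) * cloc F s1 s2 s3 x w v
      = ∑ w, cloc F s1 s2 s3 x v w * (if w.1 = u.1 then (1:F) else 0) := by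
    apply Finset.sum_congr rfl
    intro w _
    rw [cloc_comm F s1 s2 s3 x w v, mul_comm]
    congr 1
    by_cases h : u.1 = w.1
    · simp [h]
    · simp [h, Ne.symm h]
  rw [swap]
  rcases s1 <;> rcases s2 <;> rcases s3
  case false.true.false => exact (Bool.false_ne_true (hs23 rfl)).elim
  case true.true.false => exact (Bool.false_ne_true (hs23 rfl)).elim
  case false.false.false =>
    have hSval : ∀ p q : Fin A × Fin B,
        ∑ w, cloc F false false false x p w * (if w.1 = q.1 then (1:F) else 0)
          = (if p.1 = q.1 then (1:F) else 0) := by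
      intro p q
      by_cases hp : tau x p = Gflag false false
      · rw [S_on F false false false x p q hp]
        have hpt : ∀ w : Fin A × Fin B, (if tau x w = Gflag false false then
            (if ((false:Bool) = true ∧ (false:Bool) = false ∧ (false:Bool) = false : Prop)
              then (if p.1 = w.1 then (1:F) else 0) else 1)
              * (if w.1 = q.1 then (1:F) else 0) else 0)
            = (if tau x w = 0 then (if w.1 = q.1 then (1:F) else 0) else 0) := by
          intro w
          by_cases hw : tau x w = 0 <;> simp [Gflag, hw]
        rw [Finset.sum_congr rfl fun w _ => hpt w, sum_count0_f]
        have : x = p := tau_eq_zero.1 (by rw [hp]; rfl)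
        rw [this]
      · rw [S_off F false false false x p q hp, alphaF]
        simp
    rw [hSval u v, hSval v u]
    by_cases h : u.1 = v.1
    · simp [h]
    · simp [h, Ne.symm h]
  case false.false.true =>
    have hSval : ∀ p q : Fin A × Fin B,
        ∑ w, cloc F false false true x p w * (if w.1 = q.1 then (1:F) else 0)
          = (B:F) * (if p.1 = q.1 then 1 else 0) := by
      intro p q
      by_cases hp : tau x p = Gflag false true
      · rw [S_on F false false true x p q hp]
        have hp2 : tau x p = 2 := by rw [hp]; rfl
        have hpt : ∀ w : Fin A × Fin B, (if tau x w = Gflag false true then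
            (if ((true:Bool) = true ∧ (false:Bool) = false ∧ (false:Bool) = false : Prop)
              then (if p.1 = w.1 then (1:F) else 0) else 1)
              * (if w.1 = q.1 then (1:F) else 0) else 0)
            = (if tau x w = 2 then (if p.1 = w.1 then (1:F) else 0) * (if w.1 = q.1 then 1 else 0) else 0) := by
          intro w
          by_cases hw : tau x w = 2 <;> simp [Gflag, hw]
        rw [Finset.sum_congr rfl fun w _ => hpt w, sum_block2_f F x p q (tau_eq_two.1 hp2)]
      · rw [S_off F false false true x p q hp]
        rfl
    rw [hSval u v, hSval v u]
    congr 1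
    by_cases h : u.1 = v.1
    · simp [h]
    · simp [h, Ne.symm h]
  case false.true.true =>
    have hSval : ∀ p q : Fin A × Fin B,
        ∑ w, cloc F false true true x p w * (if w.1 = q.1 then (1:F) else 0)
          = if tau x p = 2 then (if x.1 = q.1 then 0 else (B:F))
            else ((A:F)-1) * (B:F) * (if p.1 = q.1 then 1 else 0) := by
      intro p q
      have hG : Gflag false true = 2 := rfl
      by_cases hp : tau x p = Gflag false true
      · rw [S_on F false true true x p q hp]
        rw [hG] at hp
        rw [if_pos hp]
        have hpt : ∀ w : Fin A × Fin B, (if tau x w = Gflag false true then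
            (if ((true:Bool) = true ∧ (true:Bool) = false ∧ (false:Bool) = false : Prop)
              then (if p.1 = w.1 then (1:F) else 0) else 1)
              * (if w.1 = q.1 then (1:F) else 0) else 0)
            = (if tau x w = 2 then (if w.1 = q.1 then (1:F) else 0) else 0) := by
          intro w
          by_cases hw : tau x w = 2 <;> simp [Gflag, hw]
        rw [Finset.sum_congr rfl fun w _ => hpt w, sum_block2_fv]
      · rw [S_off F false true true x p q hp]
        rw [hG] at hp
        rw [if_neg hp]
        rfl
    rw [hSval u v, hSval v u]
    by_cases hu : tau x u = 2 <;> by_cases hv : tau x v = 2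
    · rw [if_pos hu, if_pos hv, if_neg (tau_eq_two.1 hu), if_neg (tau_eq_two.1 hv)]
    · have hv1 : x.1 = v.1 := by
        by_contra h; exact hv (tau_eq_two.2 h)
      rw [if_pos hu, if_neg hv, if_pos hv1]
      have : ¬ v.1 = u.1 := fun h => (tau_eq_two.1 hu) (hv1.trans h)
      simp [this]
    · have hu1 : x.1 = u.1 := by
        by_contra h; exact hu (tau_eq_two.2 h)
      rw [if_neg hu, if_pos hv, if_pos hu1]
      have : ¬ u.1 = v.1 := fun h => (tau_eq_two.1 hv) (hu1.trans h)
      simp [this]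
    · rw [if_neg hu, if_neg hv]
      congr 1
      by_cases h : u.1 = v.1
      · simp [h]
      · simp [h, Ne.symm h]
  case true.false.false =>
    have hSval : ∀ p q : Fin A × Fin B,
        ∑ w, cloc F true false false x p w * (if w.1 = q.1 then (1:F) else 0)
          = ((B:F)-1) * (if p.1 = q.1 then 1 else 0) := by
      intro p q
      by_cases hp : tau x p = Gflag true false
      · rw [S_on F true false false x p q hp]
        have hpt : ∀ w : Fin A × Fin B, (if tau x w = Gflag true false then
            (if ((false:Bool) = true ∧ (false:Bool) = false ∧ (true:Bool) = false : Prop)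
              then (if p.1 = w.1 then (1:F) else 0) else 1)
              * (if w.1 = q.1 then (1:F) else 0) else 0)
            = (if tau x w = 1 then (if w.1 = q.1 then (1:F) else 0) else 0) := by
          intro w
          by_cases hw : tau x w = 1 <;> simp [Gflag, hw]
        rw [Finset.sum_congr rfl fun w _ => hpt w, sum_block1_fv]
        have : x.1 = p.1 := (tau_eq_one.1 (by rw [hp]; rfl : tau x p = 1)).2
        rw [this]
      · rw [S_off F true false false x p q hp]
        rfl
    rw [hSval u v, hSval v u]
    congr 1
    by_cases h : u.1 = v.1
    · simp [h]
    · simp [h, Ne.symm h]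
  case true.false.true =>
    have hSval : ∀ p q : Fin A × Fin B,
        ∑ w, cloc F true false true x p w * (if w.1 = q.1 then (1:F) else 0)
          = ((B:F)-1) * (if p.1 = q.1 then 1 else 0) := by
      intro p q
      by_cases hp : tau x p = Gflag true true
      · rw [S_on F true false true x p q hp]
        have hpt : ∀ w : Fin A × Fin B, (if tau x w = Gflag true true then
            (if ((true:Bool) = true ∧ (false:Bool) = false ∧ (true:Bool) = false : Prop)
              then (if p.1 = w.1 then (1:F) else 0) else 1)
              * (if w.1 = q.1 then (1:F) else 0) else 0)
            = (if tau x w = 1 then (if w.1 = q.1 then (1:F) else 0) else 0) := by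
          intro w
          by_cases hw : tau x w = 1 <;> simp [Gflag, hw]
        rw [Finset.sum_congr rfl fun w _ => hpt w, sum_block1_fv]
        have : x.1 = p.1 := (tau_eq_one.1 (by rw [hp]; rfl : tau x p = 1)).2
        rw [this]
      · rw [S_off F true false true x p q hp]
        rfl
    rw [hSval u v, hSval v u]
    congr 1
    by_cases h : u.1 = v.1
    · simp [h]
    · simp [h, Ne.symm h]
  case true.true.true =>
    have hSval : ∀ p q : Fin A × Fin B,
        ∑ w, cloc F true true true x p w * (if w.1 = q.1 then (1:F) else 0)
          = ((B:F)-1) * (if p.1 = q.1 then 1 else 0) := by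
      intro p q
      by_cases hp : tau x p = Gflag true true
      · rw [S_on F true true true x p q hp]
        have hpt : ∀ w : Fin A × Fin B, (if tau x w = Gflag true true then
            (if ((true:Bool) = true ∧ (true:Bool) = false ∧ (true:Bool) = false : Prop)
              then (if p.1 = w.1 then (1:F) else 0) else 1)
              * (if w.1 = q.1 then (1:F) else 0) else 0)
            = (if tau x w = 1 then (if w.1 = q.1 then (1:F) else 0) else 0) := by
          intro w
          by_cases hw : tau x w = 1 <;> simp [Gflag, hw]
        rw [Finset.sum_congr rfl fun w _ => hpt w, sum_block1_fv]
        have : x.1 = p.1 := (tau_eq_one.1 (by rw [hp]; rfl : tau x p = 1)).2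
        rw [this]
      · rw [S_off F true true true x p q hp]
        rfl
    rw [hSval u v, hSval v u]
    congr 1
    by_cases h : u.1 = v.1
    · simp [h]
    · simp [h, Ne.symm h]

end commLocal



section moreLocal

variable {A B : ℕ} (F : Type) [Field F] (s1 s2 s3 : Bool)

lemma tau_ind_zero (w v : Fin A × Fin B) :
    (if tau w v = 0 then (1:F) else 0) = (if w = v then 1 else 0) := by
  by_cases h : w = v
  · rw [if_pos (tau_eq_zero.2 h), if_pos h]
  · rw [if_neg (fun hh => h (tau_eq_zero.1 hh)), if_neg h]

lemma tau_ind_one (w v : Fin A × Fin B) :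
    (if tau w v = 1 then (1:F) else 0)
      = (if w.1 = v.1 then 1 else 0) - (if w = v then 1 else 0) := by
  by_cases h : w = v
  · subst h; rw [if_neg (by rw [tau_eq_zero.2 rfl]; decide), if_pos rfl, if_pos rfl]; ring
  · by_cases h2 : w.1 = v.1
    · rw [if_pos (tau_eq_one.2 ⟨h, h2⟩), if_pos h2, if_neg h]; ring
    · rw [if_neg (fun hh => h2 (tau_eq_one.1 hh).2), if_neg h2, if_neg h]; ring

lemma tau_ind_two (w v : Fin A × Fin B) :
    (if tau w v = 2 then (1:F) else 0) = 1 - (if w.1 = v.1 then 1 else 0) := by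
  by_cases h2 : w.1 = v.1
  · rw [if_neg (fun hh => (tau_eq_two.1 hh) h2), if_pos h2]; ring
  · rw [if_pos (tau_eq_two.2 h2), if_neg h2]; ring

lemma fin3_eq (j : Fin 3) : j = 0 ∨ j = 1 ∨ j = 2 := by
  fin_cases j
  · exact Or.inl rfl
  · exact Or.inr (Or.inl rfl)
  · exact Or.inr (Or.inr rfl)

lemma cloc_mul_tau (hs23 : s2 = true → s3 = true) (j : Fin 3) (x u v : Fin A × Fin B) :
    ∑ w, cloc F s1 s2 s3 x u w * (if tau w v = j then (1:F) else 0)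
      = ∑ w, (if tau u w = j then (1:F) else 0) * cloc F s1 s2 s3 x w v := by
  have hdL : ∑ w, cloc F s1 s2 s3 x u w * (if w = v then (1:F) else 0)
      = cloc F s1 s2 s3 x u v := by
    have h : ∀ w ∈ Finset.univ, cloc F s1 s2 s3 x u w * (if w = v then (1:F) else 0)
        = (if v = w then cloc F s1 s2 s3 x u w else 0) := by
      intro w _
      by_cases h : w = v
      · rw [if_pos h, if_pos h.symm, mul_one]
      · rw [if_neg h, if_neg (fun hh => h hh.symm), mul_zero]
    rw [Finset.sum_congr rfl h, sum_delta]
  have hdR : ∑ w, (if u = w then (1:F) else 0) * cloc F s1 s2 s3 x w v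
      = cloc F s1 s2 s3 x u v := by
    have h : ∀ w ∈ Finset.univ, (if u = w then (1:F) else 0) * cloc F s1 s2 s3 x w v
        = (if u = w then cloc F s1 s2 s3 x w v else 0) := by
      intro w _
      by_cases h : u = w <;> simp [h]
    rw [Finset.sum_congr rfl h, sum_delta]
  rcases fin3_eq j with rfl | rfl | rfl
  · have e1 : ∀ w ∈ Finset.univ, cloc F s1 s2 s3 x u w * (if tau w v = 0 then (1:F) else 0)
        = cloc F s1 s2 s3 x u w * (if w = v then (1:F) else 0) := fun w _ => by
      rw [tau_ind_zero]
    have e2 : ∀ w ∈ Finset.univ, (if tau u w = 0 then (1:F) else 0) * cloc F s1 s2 s3 x w v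
        = (if u = w then (1:F) else 0) * cloc F s1 s2 s3 x w v := fun w _ => by
      rw [tau_ind_zero]
    rw [Finset.sum_congr rfl e1, Finset.sum_congr rfl e2, hdL, hdR]
  · have e1 : ∀ w ∈ Finset.univ, cloc F s1 s2 s3 x u w * (if tau w v = 1 then (1:F) else 0)
        = cloc F s1 s2 s3 x u w * (if w.1 = v.1 then (1:F) else 0)
          - cloc F s1 s2 s3 x u w * (if w = v then (1:F) else 0) := fun w _ => by
      rw [tau_ind_one, mul_sub]
    have e2 : ∀ w ∈ Finset.univ, (if tau u w = 1 then (1:F) else 0) * cloc F s1 s2 s3 x w v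
        = (if u.1 = w.1 then (1:F) else 0) * cloc F s1 s2 s3 x w v
          - (if u = w then (1:F) else 0) * cloc F s1 s2 s3 x w v := fun w _ => by
      rw [tau_ind_one, sub_mul]
    rw [Finset.sum_congr rfl e1, Finset.sum_congr rfl e2, Finset.sum_sub_distrib,
      Finset.sum_sub_distrib, hdL, hdR, cloc_mul_f F s1 s2 s3 hs23 x u v]
  · have e1 : ∀ w ∈ Finset.univ, cloc F s1 s2 s3 x u w * (if tau w v = 2 then (1:F) else 0)
        = cloc F s1 s2 s3 x u w
          - cloc F s1 s2 s3 x u w * (if w.1 = v.1 then (1:F) else 0) := fun w _ => by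
      rw [tau_ind_two, mul_sub, mul_one]
    have e2 : ∀ w ∈ Finset.univ, (if tau u w = 2 then (1:F) else 0) * cloc F s1 s2 s3 x w v
        = cloc F s1 s2 s3 x w v
          - (if u.1 = w.1 then (1:F) else 0) * cloc F s1 s2 s3 x w v := fun w _ => by
      rw [tau_ind_two, sub_mul, one_mul]
    rw [Finset.sum_congr rfl e1, Finset.sum_congr rfl e2, Finset.sum_sub_distrib,
      Finset.sum_sub_distrib, cloc_rowsum F s1 s2 s3 hs23 x u,
      cloc_colsum F s1 s2 s3 hs23 x v, cloc_mul_f F s1 s2 s3 hs23 x u v]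

lemma exists_tau_G (hA : 2 ≤ A) (hB : 2 ≤ B) (x : Fin A × Fin B) :
    ∃ u, tau x u = Gflag s1 s3 := by
  rcases s1
  · rcases s3
    · exact ⟨x, tau_eq_zero.2 rfl⟩
    · obtain ⟨a, ha⟩ := Fintype.exists_ne_of_one_lt_card (by simpa using (show 1 < A by omega)) x.1
      exact ⟨(a, x.2), tau_eq_two.2 (by simpa using (Ne.symm ha))⟩
  · obtain ⟨b, hb⟩ := Fintype.exists_ne_of_one_lt_card (by simpa using (show 1 < B by omega)) x.2
    refine ⟨(x.1, b), tau_eq_one.2 ⟨?_, rfl⟩⟩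
    intro h
    exact hb (congrArg Prod.snd h.symm)

lemma cloc_diag_one (hA : 2 ≤ A) (hB : 2 ≤ B) (x : Fin A × Fin B) :
    ∃ u, cloc F s1 s2 s3 x u u = 1 := by
  obtain ⟨u, hu⟩ := exists_tau_G s1 s3 hA hB x
  refine ⟨u, ?_⟩
  rw [cloc_on F s1 s2 s3 x u hu u, if_pos hu]
  by_cases hb : s3 = true ∧ ¬s2 = true ∧ ¬s1 = true <;> simp [hb]

end moreLocal



section ifform

variable {A B : ℕ} (F : Type) [Field F]

/-- local membership condition for `U_{g,g,g∩𝔥}` -/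
def locOK (s1 s2 s3 : Bool) (A B : ℕ) (g a : Fin 3) : Prop :=
  (a = 1 → (g = 1 ∧ 2 < B) ∨ g = 2) ∧ (a = 2 → g = 2 ∧ 2 < A) ∧
  (a = 1 → g = 1 → s1 = true) ∧ (a = 2 → s2 = true) ∧ (a = 1 → g = 2 → s3 = true)

/-- local factor of `k_{𝔥∖g}` -/
noncomputable def klocKF (s1 s2 s3 : Bool) (A B : ℕ) (g : Fin 3) : F :=
  if s1 = true ∧ g ≠ 1 then (B:F)-1
  else if s2 = true ∧ g ≠ 2 then ((A:F)-1)*(B:F)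
  else if (s3 = true ∧ s2 = false) ∧ g ≠ 2 then (B:F)
  else 1

lemma locOK_diag (s1 s2 s3 : Bool) (g : Fin 3) (u : Fin A × Fin B) :
    locOK s1 s2 s3 A B g (tau u u) := by
  have h0 : tau u u = 0 := tau_eq_zero.2 rfl
  refine ⟨?_, ?_, ?_, ?_, ?_⟩ <;> rw [h0] <;> intro h <;> exact absurd h (by decide)

lemma cloc_eq_ifform (s1 s2 s3 : Bool) (hs1 : s1 = true → 2 < B) (hs2 : s2 = true → 2 < A)
    (hs23 : s2 = true → s3 = true) (hs13 : ¬ (s1 = true ∧ s3 = true))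
    (x u v : Fin A × Fin B) :
    cloc F s1 s2 s3 x u v
      = if (tau x v = tau x u ∧ locOK s1 s2 s3 A B (tau x u) (tau u v))
        then klocKF F s1 s2 s3 A B (tau x u) else 0 := by
  rcases s1 <;> rcases s2 <;> rcases s3
  case false.true.false => exact (Bool.false_ne_true (hs23 rfl)).elim
  case true.true.false => exact (Bool.false_ne_true (hs23 rfl)).elim
  case true.false.true => exact (hs13 ⟨rfl, rfl⟩).elim
  case true.true.true => exact (hs13 ⟨rfl, rfl⟩).elim
  case false.false.false =>
    have hcl : cloc F false false false x u v = if u = v then (1:F) else 0 := by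
      unfold cloc
      by_cases hb : tau x u = Gflag false false ∧ tau x v = Gflag false false
      · have hu : x = u := tau_eq_zero.1 hb.1
        have hv : x = v := tau_eq_zero.1 hb.2
        rw [if_pos hb, if_pos (hu.symm.trans hv)]
        simp
      · rw [if_neg hb]
        simp [alphaF]
    rw [hcl]
    by_cases huv : u = v
    · have hcond : tau x v = tau x u ∧ locOK false false false A B (tau x u) (tau u v) := by
        subst huv
        exact ⟨rfl, locOK_diag _ _ _ _ u⟩
      rw [if_pos huv, if_pos hcond]
      simp [klocKF]
    · have hcond : ¬ (tau x v = tau x u ∧ locOK false false false A B (tau x u) (tau u v)) := by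
        rintro ⟨hteq, hOK⟩
        rcases fin3_eq (tau u v) with h0 | h1 | h2
        · exact huv (tau_eq_zero.1 h0)
        · rcases hOK.1 h1 with ⟨hg, _⟩ | hg
          · exact absurd (hOK.2.2.1 h1 hg) (by decide)
          · exact absurd (hOK.2.2.2.2 h1 hg) (by decide)
        · exact absurd (hOK.2.2.2.1 h2) (by decide)
      rw [if_neg huv, if_neg hcond]
  case true.false.false =>
    have hB2 : 2 < B := hs1 rfl
    have hcl : cloc F true false false x u v
        = if (tau x u = 1 ∧ tau x v = 1) then (1:F) else ((B:F)-1) * (if u = v then 1 else 0) := by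
      unfold cloc
      by_cases hb : tau x u = (1 : Fin 3) ∧ tau x v = 1
      · rw [if_pos (show tau x u = Gflag true false ∧ tau x v = Gflag true false from hb),
          if_pos hb]
        simp
      · rw [if_neg (show ¬ (tau x u = Gflag true false ∧ tau x v = Gflag true false) from hb),
          if_neg hb]
        simp [alphaF]
    rw [hcl]
    by_cases hb : tau x u = (1 : Fin 3) ∧ tau x v = 1
    · have hu1 : x.1 = u.1 := (tau_eq_one.1 hb.1).2
      have hv1 : x.1 = v.1 := (tau_eq_one.1 hb.2).2
      have hno2 : tau u v ≠ 2 := fun h2 => (tau_eq_two.1 h2) (hu1.symm.trans hv1)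
      have hcond : tau x v = tau x u ∧ locOK true false false A B (tau x u) (tau u v) := by
        refine ⟨hb.2.trans hb.1.symm, ?_, fun h2 => absurd h2 hno2, fun _ _ => rfl,
          fun h2 => absurd h2 hno2, ?_⟩
        · intro _; exact Or.inl ⟨hb.1, hB2⟩
        · intro _ hg; rw [hb.1] at hg; exact absurd hg (by decide)
      rw [if_pos hb, if_pos hcond, hb.1]
      simp [klocKF]
    · rw [if_neg hb]
      by_cases huv : u = v
      · have hg1 : tau x u ≠ 1 := fun h => hb ⟨h, huv ▸ h⟩
        have hcond : tau x v = tau x u ∧ locOK true false false A B (tau x u) (tau u v) := by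
          subst huv; exact ⟨rfl, locOK_diag _ _ _ _ u⟩
        rw [if_pos hcond]
        simp [klocKF, hg1, ← huv]
      · have hcond : ¬ (tau x v = tau x u ∧ locOK true false false A B (tau x u) (tau u v)) := by
          rintro ⟨hteq, hOK⟩
          rcases fin3_eq (tau u v) with h0 | h1 | h2
          · exact huv (tau_eq_zero.1 h0)
          · rcases hOK.1 h1 with ⟨hg, _⟩ | hg
            · exact hb ⟨hg, hteq.trans hg⟩
            · exact absurd (hOK.2.2.2.2 h1 hg) (by decide)
          · exact absurd (hOK.2.2.2.1 h2) (by decide)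
        rw [if_neg hcond]
        simp [huv]
  case false.false.true =>
    have hcl : cloc F false false true x u v
        = if (tau x u = 2 ∧ tau x v = 2) then (if u.1 = v.1 then (1:F) else 0)
          else (B:F) * (if u = v then 1 else 0) := by
      unfold cloc
      by_cases hb : tau x u = (2 : Fin 3) ∧ tau x v = 2
      · rw [if_pos (show tau x u = Gflag false true ∧ tau x v = Gflag false true from hb),
          if_pos hb]
        simp
      · rw [if_neg (show ¬ (tau x u = Gflag false true ∧ tau x v = Gflag false true) from hb),
          if_neg hb]
        simp [alphaF]
    rw [hcl]
    by_cases hb : tau x u = (2 : Fin 3) ∧ tau x v = 2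
    · rw [if_pos hb]
      by_cases hf : u.1 = v.1
      · have hcond : tau x v = tau x u ∧ locOK false false true A B (tau x u) (tau u v) := by
          refine ⟨hb.2.trans hb.1.symm, fun _ => Or.inr hb.1,
            fun h2 => absurd hf (tau_eq_two.1 h2), ?_,
            fun h2 => absurd hf (tau_eq_two.1 h2), fun _ _ => rfl⟩
          intro _ hg; rw [hb.1] at hg; exact absurd hg (by decide)
        rw [if_pos hcond, if_pos hf, hb.1]
        simp [klocKF]
      · have hcond : ¬ (tau x v = tau x u ∧ locOK false false true A B (tau x u) (tau u v)) := by
          rintro ⟨hteq, hOK⟩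
          exact absurd (hOK.2.2.2.1 (tau_eq_two.2 hf)) (by decide)
        rw [if_neg hcond, if_neg hf]
    · rw [if_neg hb]
      by_cases huv : u = v
      · have hg2 : tau x u ≠ 2 := fun h => hb ⟨h, huv ▸ h⟩
        have hcond : tau x v = tau x u ∧ locOK false false true A B (tau x u) (tau u v) := by
          subst huv; exact ⟨rfl, locOK_diag _ _ _ _ u⟩
        rw [if_pos hcond]
        simp [klocKF, hg2, ← huv]
      · have hcond : ¬ (tau x v = tau x u ∧ locOK false false true A B (tau x u) (tau u v)) := by
          rintro ⟨hteq, hOK⟩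
          rcases fin3_eq (tau u v) with h0 | h1 | h2
          · exact huv (tau_eq_zero.1 h0)
          · rcases hOK.1 h1 with ⟨hg, _⟩ | hg
            · exact absurd (hOK.2.2.1 h1 hg) (by decide)
            · exact hb ⟨hg, hteq.trans hg⟩
          · exact absurd (hOK.2.2.2.1 h2) (by decide)
        rw [if_neg hcond]
        simp [huv]
  case false.true.true =>
    have hA2 : 2 < A := hs2 rfl
    have hcl : cloc F false true true x u v
        = if (tau x u = 2 ∧ tau x v = 2) then (1:F)
          else ((A:F)-1) * (B:F) * (if u = v then 1 else 0) := by
      unfold cloc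
      by_cases hb : tau x u = (2 : Fin 3) ∧ tau x v = 2
      · rw [if_pos (show tau x u = Gflag false true ∧ tau x v = Gflag false true from hb),
          if_pos hb]
        simp
      · rw [if_neg (show ¬ (tau x u = Gflag false true ∧ tau x v = Gflag false true) from hb),
          if_neg hb]
        simp [alphaF, mul_assoc]
    rw [hcl]
    by_cases hb : tau x u = (2 : Fin 3) ∧ tau x v = 2
    · have hcond : tau x v = tau x u ∧ locOK false true true A B (tau x u) (tau u v) := by
        refine ⟨hb.2.trans hb.1.symm, fun _ => Or.inr hb.1, fun _ => ⟨hb.1, hA2⟩, ?_,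
          fun _ => rfl, fun _ _ => rfl⟩
        intro _ hg; rw [hb.1] at hg; exact absurd hg (by decide)
      rw [if_pos hb, if_pos hcond, hb.1]
      simp [klocKF]
    · rw [if_neg hb]
      by_cases huv : u = v
      · have hg2 : tau x u ≠ 2 := fun h => hb ⟨h, huv ▸ h⟩
        have hcond : tau x v = tau x u ∧ locOK false true true A B (tau x u) (tau u v) := by
          subst huv; exact ⟨rfl, locOK_diag _ _ _ _ u⟩
        rw [if_pos hcond]
        simp [klocKF, hg2, ← huv, mul_assoc]
      · have hcond : ¬ (tau x v = tau x u ∧ locOK false true true A B (tau x u) (tau u v)) := by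
          rintro ⟨hteq, hOK⟩
          rcases fin3_eq (tau u v) with h0 | h1 | h2
          · exact huv (tau_eq_zero.1 h0)
          · rcases hOK.1 h1 with ⟨hg, _⟩ | hg
            · exact absurd (hOK.2.2.1 h1 hg) (by decide)
            · exact hb ⟨hg, hteq.trans hg⟩
          · exact hb ⟨(hOK.2.1 h2).1, hteq.trans (hOK.2.1 h2).1⟩
        rw [if_neg hcond]
        simp [huv]

end ifform




section globalLemmas

variable {n : ℕ} (F : Type) [Field F] (ℓ m : Fin n → ℕ)

lemma rel1_iff {a b : ℕ} (j : Fin 3) (u v : Fin a × Fin b) : rel1 j u v ↔ tau u v = j := by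
  rcases fin3_eq j with rfl | rfl | rfl
  · simpa [rel1] using tau_eq_zero.symm
  · simpa [rel1] using tau_eq_one.symm
  · simpa [rel1] using tau_eq_two.symm

lemma Rel_iff (g : Lbl n) (y z : Pt ℓ m) :
    Rel ℓ m g y z ↔ ∀ t, tau (y t) (z t) = g t :=
  forall_congr' fun t => rel1_iff (g t) (y t) (z t)

lemma Rel_iff' (g : Lbl n) (y z : Pt ℓ m) :
    Rel ℓ m g y z ↔ g = fun t => tau (y t) (z t) := by
  rw [Rel_iff, funext_iff]
  exact ⟨fun h t => (h t).symm, fun h t => (h t).symm⟩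

lemma prod_ite_zero {P : Fin n → Prop} [∀ t, Decidable (P t)] (f : Fin n → F) :
    (∏ t, if P t then f t else 0) = if (∀ t, P t) then ∏ t, f t else 0 := by
  by_cases h : ∀ t, P t
  · rw [if_pos h]
    exact Finset.prod_congr rfl fun t _ => if_pos (h t)
  · rw [if_neg h]
    push_neg at h
    obtain ⟨t, ht⟩ := h
    exact Finset.prod_eq_zero (Finset.mem_univ t) (if_neg ht)

lemma Amat_apply_prod (g : Lbl n) (y z : Pt ℓ m) :
    Amat F ℓ m g y z = ∏ t, (if tau (y t) (z t) = g t then (1:F) else 0) := by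
  rw [Amat, prod_ite_zero, show (Rel ℓ m g y z) = (∀ t, tau (y t) (z t) = g t)
    from propext (Rel_iff ℓ m g y z)]
  simp

lemma Bmat_apply (x : Pt ℓ m) (g h : Lbl n) (c : Trip n) (y z : Pt ℓ m) :
    Bmat F ℓ m x g h c y z
      = if (Rel ℓ m g x y ∧ Rel ℓ m h x z ∧ MemUc ℓ m g h c (fun t => tau (y t) (z t)))
        then 1 else 0 := by
  unfold Bmat
  rw [Matrix.sum_apply]
  have hterm : ∀ a : Lbl n,
      (Estar F ℓ m x g * Amat F ℓ m a * Estar F ℓ m x h) y z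
        = if a = (fun t => tau (y t) (z t)) then
            ((if Rel ℓ m g x y then (1:F) else 0) * (if Rel ℓ m h x z then 1 else 0)) else 0 := by
    intro a
    rw [show Estar F ℓ m x h = Matrix.diagonal (fun y => if Rel ℓ m h x y then (1:F) else 0)
        from rfl, Matrix.mul_diagonal,
      show Estar F ℓ m x g = Matrix.diagonal (fun y => if Rel ℓ m g x y then (1:F) else 0)
        from rfl, Matrix.diagonal_mul]
    rw [show Amat F ℓ m a y z = (if Rel ℓ m a y z then (1:F) else 0) from rfl,
      show (Rel ℓ m a y z) = (a = fun t => tau (y t) (z t))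
        from propext (Rel_iff' ℓ m a y z)]
    by_cases ha : a = (fun t => tau (y t) (z t)) <;> simp [ha] <;> ring
  rw [Finset.sum_congr rfl fun a _ => hterm a, Finset.sum_ite_eq']
  by_cases h1 : Rel ℓ m g x y <;> by_cases h2 : Rel ℓ m h x z <;>
    by_cases h3 : MemUc ℓ m g h c (fun t => tau (y t) (z t)) <;>
    simp [h1, h2, h3]

lemma Cmat_apply (x : Pt ℓ m) (c : Trip n) (y z : Pt ℓ m) :
    Cmat F ℓ m x c y z
      = if ((∀ t, tau (x t) (z t) = tau (x t) (y t))
            ∧ MemUc ℓ m (fun t => tau (x t) (y t)) (fun t => tau (x t) (y t))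
                (capT (fun t => tau (x t) (y t)) c) (fun t => tau (y t) (z t)))
        then (kTrip ℓ m (sdiffT c (fun t => tau (x t) (y t))) : F) else 0 := by
  set g : Lbl n := fun t => tau (x t) (y t) with hg
  unfold Cmat
  rw [Matrix.sum_apply]
  have hterm : ∀ i : Lbl n, ((kTrip ℓ m (sdiffT c i) : F) • Bmat F ℓ m x i i (capT i c)) y z
      = if i = g then (if (Rel ℓ m i x z
            ∧ MemUc ℓ m i i (capT i c) (fun t => tau (y t) (z t)))
          then (kTrip ℓ m (sdiffT c i) : F) else 0) else 0 := by
    intro i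
    rw [Matrix.smul_apply, Bmat_apply]
    have hRel : Rel ℓ m i x y ↔ i = g := Rel_iff' ℓ m i x y
    have hRelg : Rel ℓ m g x y := (Rel_iff' ℓ m g x y).2 hg
    by_cases hi : i = g
    · by_cases h2 : Rel ℓ m i x z <;>
        by_cases h3 : MemUc ℓ m i i (capT i c) (fun t => tau (y t) (z t)) <;>
        simp [hi, hRelg, h2, h3]
    · have hnr : ¬ Rel ℓ m i x y := fun hh => hi (hRel.1 hh)
      simp [hi, hnr]
  rw [Finset.sum_congr rfl fun i _ => hterm i, Finset.sum_ite_eq']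
  simp only [Finset.mem_univ, if_true]
  exact if_congr (and_congr_left' (Rel_iff ℓ m g x z)) rfl rfl

lemma MemUc_iff (g a : Lbl n) (c : Trip n) :
    MemUc ℓ m g g (capT g c) a
      ↔ ∀ t, locOK (decide (t ∈ c.1)) (decide (t ∈ c.2.1)) (decide (t ∈ c.2.2))
          (ℓ t) (m t) (g t) (a t) := by
  unfold MemUc MemP capT locOK lset circ bullet
  simp only [Finset.subset_iff, Finset.mem_filter, Finset.mem_inter, Finset.mem_union,
    Finset.mem_sdiff, Finset.mem_univ, true_and, decide_eq_true_eq, and_imp]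
  constructor
  · intro h t
    obtain ⟨⟨h1, h2, h3, h4⟩, h5, h6, h7⟩ := h
    have ha1 : a t = 1 → (g t = 1 ∧ 2 < m t) ∨ g t = 2 := by
      intro ha
      rcases h2 ha with ((⟨hx, hy⟩ | ⟨hx, hy⟩) | ⟨⟨hg, _⟩, hmm⟩) | ⟨hg, _⟩
      · exact absurd (hx.symm.trans hy) (by decide)
      · exact absurd (hx.symm.trans hy) (by decide)
      · exact Or.inl ⟨hg, hmm⟩
      · exact Or.inr hg
    have ha2 : a t = 2 → g t = 2 ∧ 2 < ℓ t := by
      intro ha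
      rcases h4 ha with (⟨hg, hng⟩ | ⟨hg, hng⟩) | ⟨⟨hg, _⟩, hl⟩
      · exact (hng hg).elim
      · exact (hng hg).elim
      · exact ⟨hg, hl⟩
    refine ⟨ha1, ha2, ?_, ?_, ?_⟩
    · intro ha hg
      rcases ha1 ha with ⟨_, hmm⟩ | hg2
      · exact (h5 ha hg hg hmm).2
      · exact absurd (hg.symm.trans hg2) (by decide)
    · intro ha
      obtain ⟨hg, hl⟩ := ha2 ha
      exact (h6 ha hg hg hl).2
    · intro ha hg
      exact (h7 ha hg hg).2
  · intro h
    refine ⟨⟨?_, ?_, ?_, ?_⟩, ?_, ?_, ?_⟩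
    · rintro x (⟨hx, hy⟩ | ⟨hx, hy⟩) <;> exact absurd (hx.symm.trans hy) (by decide)
    · intro x ha
      rcases (h x).1 ha with ⟨hg, hmm⟩ | hg
      · exact Or.inl (Or.inr ⟨⟨hg, hg⟩, hmm⟩)
      · exact Or.inr ⟨hg, hg⟩
    · rintro x (⟨hp, hn⟩ | ⟨hp, hn⟩) <;> exact (hn hp).elim
    · intro x ha
      obtain ⟨hg, hl⟩ := (h x).2.1 ha
      exact Or.inr ⟨⟨hg, hg⟩, hl⟩
    · intro x ha hg _ _
      exact ⟨hg, (h x).2.2.1 ha hg⟩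
    · intro x ha hg _ _
      exact ⟨hg, (h x).2.2.2.1 ha⟩
    · intro x ha hg _
      exact ⟨hg, (h x).2.2.2.2 ha hg⟩

lemma MemU_flags (b : Lbl n) (c : Trip n) (hc : MemU ℓ m b b c) (t : Fin n) :
    (t ∈ c.1 → 2 < m t) ∧ (t ∈ c.2.1 → 2 < ℓ t) ∧ (t ∈ c.2.1 → t ∈ c.2.2)
      ∧ ¬(t ∈ c.1 ∧ t ∈ c.2.2) := by
  obtain ⟨h1, h2, h3, h4⟩ := hc
  refine ⟨?_, ?_, fun ht => h3 ht, ?_⟩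
  · intro ht; exact (Finset.mem_filter.1 (h1 ht)).2
  · intro ht; exact (Finset.mem_filter.1 (h2 ht)).2
  · rintro ⟨ht1, ht3⟩
    have hb1 : b t = 1 :=
      (Finset.mem_filter.1 (Finset.mem_inter.1 (Finset.mem_filter.1 (h1 ht1)).1).1).2
    have hb2 : b t = 2 := (Finset.mem_filter.1 (Finset.mem_inter.1 (h4 ht3)).1).2
    exact absurd (hb1.symm.trans hb2) (by decide)

lemma kloc_pointwise (Al Bm : ℕ) (hA : 2 ≤ Al) (hB : 2 ≤ Bm) (s1 s2 s3 : Bool)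
    (hs23 : s2 = true → s3 = true) (hs13 : ¬(s1 = true ∧ s3 = true)) (g : Fin 3) :
    (if s1 = true ∧ ¬ g = 1 then ((Bm - 1 : ℕ) : F) else 1)
      * (if s2 = true ∧ ¬ g = 2 then (((Al - 1) * Bm : ℕ) : F) else 1)
      * (if (s3 = true ∧ ¬ g = 2) ∧ ¬ (s2 = true ∧ ¬ g = 2) then ((Bm : ℕ) : F) else 1)
    = klocKF F s1 s2 s3 Al Bm g := by
  have hcB : ((Bm - 1 : ℕ) : F) = (Bm : F) - 1 := by
    rw [Nat.cast_sub (by omega)]; norm_num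
  have hcA : (((Al - 1) * Bm : ℕ) : F) = ((Al : F) - 1) * (Bm : F) := by
    rw [Nat.cast_mul, Nat.cast_sub (by omega)]; norm_num
  rcases s1 <;> rcases s2 <;> rcases s3
  case false.true.false => exact (Bool.false_ne_true (hs23 rfl)).elim
  case true.true.false => exact (Bool.false_ne_true (hs23 rfl)).elim
  case true.false.true => exact (hs13 ⟨rfl, rfl⟩).elim
  case true.true.true => exact (hs13 ⟨rfl, rfl⟩).elim
  case false.false.false => simp [klocKF]
  case true.false.false =>
    by_cases hg : g = 1 <;> simp [klocKF, hg, hcB]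
  case false.false.true =>
    by_cases hg : g = 2 <;> simp [klocKF, hg]
  case false.true.true =>
    by_cases hg : g = 2 <;> simp [klocKF, hg, hcA]

lemma aloc_pointwise (Al Bm : ℕ) (hA : 2 ≤ Al) (hB : 2 ≤ Bm) (s1 s2 s3 : Bool)
    (hs23 : s2 = true → s3 = true) (hs13 : ¬(s1 = true ∧ s3 = true)) :
    (if s1 = true then ((Bm - 1 : ℕ) : F) else 1)
      * (if s2 = true then (((Al - 1) * Bm : ℕ) : F) else 1)
      * (if s3 = true ∧ ¬ s2 = true then ((Bm : ℕ) : F) else 1)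
    = alphaF F s1 s2 s3 Al Bm := by
  have hcB : ((Bm - 1 : ℕ) : F) = (Bm : F) - 1 := by
    rw [Nat.cast_sub (by omega)]; norm_num
  have hcA : (((Al - 1) * Bm : ℕ) : F) = ((Al : F) - 1) * (Bm : F) := by
    rw [Nat.cast_mul, Nat.cast_sub (by omega)]; norm_num
  rcases s1 <;> rcases s2 <;> rcases s3
  case false.true.false => exact (Bool.false_ne_true (hs23 rfl)).elim
  case true.true.false => exact (Bool.false_ne_true (hs23 rfl)).elim
  case true.false.true => exact (hs13 ⟨rfl, rfl⟩).elim
  case true.true.true => exact (hs13 ⟨rfl, rfl⟩).elim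
  all_goals simp [alphaF, hcA, hcB]

lemma kUVW_cast_prod (U V W : Finset (Fin n)) :
    ((kUVW ℓ m U V W : ℕ) : F)
      = ∏ t, ((if t ∈ U then ((m t - 1 : ℕ) : F) else 1)
          * (if t ∈ V then (((ℓ t - 1) * m t : ℕ) : F) else 1)
          * (if t ∈ W \ V then ((m t : ℕ) : F) else 1)) := by
  have h1 : (∏ t, if t ∈ U then ((m t - 1 : ℕ) : F) else 1) = ∏ j ∈ U, ((m j - 1 : ℕ) : F) := by
    rw [Finset.prod_ite_mem, Finset.univ_inter]
  have h2 : (∏ t, if t ∈ V then (((ℓ t - 1) * m t : ℕ) : F) else 1)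
      = ∏ j ∈ V, (((ℓ j - 1) * m j : ℕ) : F) := by
    rw [Finset.prod_ite_mem, Finset.univ_inter]
  have h3 : (∏ t, if t ∈ W \ V then ((m t : ℕ) : F) else 1) = ∏ j ∈ W \ V, ((m j : ℕ) : F) := by
    rw [Finset.prod_ite_mem, Finset.univ_inter]
  rw [Finset.prod_mul_distrib, Finset.prod_mul_distrib, h1, h2, h3]
  unfold kUVW
  rw [Nat.cast_mul, Nat.cast_mul, Nat.cast_prod, Nat.cast_prod, Nat.cast_prod]

lemma kTrip_sdiff_prod (hℓ : ∀ i, 2 ≤ ℓ i) (hm : ∀ i, 2 ≤ m i) (b : Lbl n) (c : Trip n)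
    (hc : MemU ℓ m b b c) (g : Lbl n) :
    ((kTrip ℓ m (sdiffT c g) : ℕ) : F)
      = ∏ t, klocKF F (decide (t ∈ c.1)) (decide (t ∈ c.2.1)) (decide (t ∈ c.2.2))
          (ℓ t) (m t) (g t) := by
  unfold kTrip sdiffT
  rw [kUVW_cast_prod]
  apply Finset.prod_congr rfl
  intro t _
  obtain ⟨hf1, hf2, hf23, hf13⟩ := MemU_flags ℓ m b c hc t
  rw [← kloc_pointwise F (ℓ t) (m t) (hℓ t) (hm t) _ _ _
    (by simpa using hf23) (by simpa using hf13) (g t)]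
  congr 1
  · congr 1
    · apply if_congr _ rfl rfl
      simp [lset, Finset.mem_sdiff]
    · apply if_congr _ rfl rfl
      simp [lset, Finset.mem_sdiff]
  · apply if_congr _ rfl rfl
    simp [lset, Finset.mem_sdiff]

lemma kTrip_prod (hℓ : ∀ i, 2 ≤ ℓ i) (hm : ∀ i, 2 ≤ m i) (b : Lbl n) (c : Trip n)
    (hc : MemU ℓ m b b c) :
    ((kTrip ℓ m c : ℕ) : F)
      = ∏ t, alphaF F (decide (t ∈ c.1)) (decide (t ∈ c.2.1)) (decide (t ∈ c.2.2))
          (ℓ t) (m t) := by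
  unfold kTrip
  rw [kUVW_cast_prod]
  apply Finset.prod_congr rfl
  intro t _
  obtain ⟨hf1, hf2, hf23, hf13⟩ := MemU_flags ℓ m b c hc t
  rw [← aloc_pointwise F (ℓ t) (m t) (hℓ t) (hm t) _ _ _
    (by simpa using hf23) (by simpa using hf13)]
  congr 1
  · congr 1 <;> apply if_congr _ rfl rfl <;> simp
  · apply if_congr _ rfl rfl
    simp [Finset.mem_sdiff]

lemma Cmat_apply_prod (hl : ∀ i, 2 ≤ ℓ i) (hm : ∀ i, 2 ≤ m i) (x : Pt ℓ m) (b : Lbl n)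
    (c : Trip n) (hc : MemU ℓ m b b c) (y z : Pt ℓ m) :
    Cmat F ℓ m x c y z
      = ∏ t, cloc F (decide (t ∈ c.1)) (decide (t ∈ c.2.1)) (decide (t ∈ c.2.2))
          (x t) (y t) (z t) := by
  rw [Cmat_apply]
  have hrw : ∀ t ∈ Finset.univ,
      cloc F (decide (t ∈ c.1)) (decide (t ∈ c.2.1)) (decide (t ∈ c.2.2)) (x t) (y t) (z t)
        = if (tau (x t) (z t) = tau (x t) (y t)
            ∧ locOK (decide (t ∈ c.1)) (decide (t ∈ c.2.1)) (decide (t ∈ c.2.2))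
                (ℓ t) (m t) (tau (x t) (y t)) (tau (y t) (z t)))
          then klocKF F (decide (t ∈ c.1)) (decide (t ∈ c.2.1)) (decide (t ∈ c.2.2))
              (ℓ t) (m t) (tau (x t) (y t)) else 0 := by
    intro t _
    obtain ⟨hf1, hf2, hf23, hf13⟩ := MemU_flags ℓ m b c hc t
    exact cloc_eq_ifform F _ _ _ (by simpa using hf1) (by simpa using hf2)
      (by simpa using hf23) (by simpa using hf13) (x t) (y t) (z t)
  rw [Finset.prod_congr rfl hrw, prod_ite_zero]
  rw [kTrip_sdiff_prod F ℓ m hl hm b c hc (fun t => tau (x t) (y t))]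
  apply if_congr _ rfl rfl
  rw [MemUc_iff]
  exact (forall_and.symm : _)

lemma mul_apply_prodloc (f h : ∀ t : Fin n, Fin (ℓ t) × Fin (m t) → Fin (ℓ t) × Fin (m t) → F)
    (y z : Pt ℓ m) :
    ∑ w : Pt ℓ m, (∏ t, f t (y t) (w t)) * (∏ t, h t (w t) (z t))
      = ∏ t, (∑ p, f t (y t) p * h t p (z t)) := by
  have hq : ∀ w ∈ (Finset.univ : Finset (Pt ℓ m)), (∏ t, f t (y t) (w t)) * (∏ t, h t (w t) (z t))
      = ∏ t, (f t (y t) (w t) * h t (w t) (z t)) := fun w _ => Finset.prod_mul_distrib.symm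
  rw [Finset.sum_congr rfl hq]
  rw [Finset.prod_univ_sum (fun _ => Finset.univ)
    (fun t p => f t (y t) p * h t p (z t)), Fintype.piFinset_univ]

lemma Cmat_mul_Cmat (hl : ∀ i, 2 ≤ ℓ i) (hm : ∀ i, 2 ≤ m i) (x : Pt ℓ m) (b : Lbl n)
    (c : Trip n) (hc : MemU ℓ m b b c) :
    Cmat F ℓ m x c * Cmat F ℓ m x c = (kTrip ℓ m c : F) • Cmat F ℓ m x c := by
  ext y z
  rw [Matrix.mul_apply, Matrix.smul_apply, smul_eq_mul]
  have h1 : ∀ w ∈ Finset.univ, Cmat F ℓ m x c y w * Cmat F ℓ m x c w z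
      = (∏ t, cloc F (decide (t ∈ c.1)) (decide (t ∈ c.2.1)) (decide (t ∈ c.2.2))
          (x t) (y t) (w t))
        * (∏ t, cloc F (decide (t ∈ c.1)) (decide (t ∈ c.2.1)) (decide (t ∈ c.2.2))
          (x t) (w t) (z t)) := fun w _ => by
    rw [Cmat_apply_prod F ℓ m hl hm x b c hc, Cmat_apply_prod F ℓ m hl hm x b c hc]
  rw [Finset.sum_congr rfl h1, mul_apply_prodloc]
  have h2 : ∀ t ∈ Finset.univ,
      ∑ p, cloc F (decide (t ∈ c.1)) (decide (t ∈ c.2.1)) (decide (t ∈ c.2.2)) (x t) (y t) p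
        * cloc F (decide (t ∈ c.1)) (decide (t ∈ c.2.1)) (decide (t ∈ c.2.2)) (x t) p (z t)
      = alphaF F (decide (t ∈ c.1)) (decide (t ∈ c.2.1)) (decide (t ∈ c.2.2)) (ℓ t) (m t)
        * cloc F (decide (t ∈ c.1)) (decide (t ∈ c.2.1)) (decide (t ∈ c.2.2))
            (x t) (y t) (z t) := by
    intro t _
    obtain ⟨hf1, hf2, hf23, hf13⟩ := MemU_flags ℓ m b c hc t
    exact cloc_conv F _ _ _ (by simpa using hf23) (x t) (y t) (z t)
  rw [Finset.prod_congr rfl h2, Finset.prod_mul_distrib,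
    ← kTrip_prod F ℓ m hl hm b c hc, ← Cmat_apply_prod F ℓ m hl hm x b c hc]

lemma Cmat_commute_Amat (hl : ∀ i, 2 ≤ ℓ i) (hm : ∀ i, 2 ≤ m i) (x : Pt ℓ m) (b : Lbl n)
    (c : Trip n) (hc : MemU ℓ m b b c) (g : Lbl n) :
    Cmat F ℓ m x c * Amat F ℓ m g = Amat F ℓ m g * Cmat F ℓ m x c := by
  ext y z
  rw [Matrix.mul_apply, Matrix.mul_apply]
  have h1 : ∀ w ∈ Finset.univ, Cmat F ℓ m x c y w * Amat F ℓ m g w z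
      = (∏ t, cloc F (decide (t ∈ c.1)) (decide (t ∈ c.2.1)) (decide (t ∈ c.2.2))
          (x t) (y t) (w t))
        * (∏ t, (if tau (w t) (z t) = g t then (1:F) else 0)) := fun w _ => by
    rw [Cmat_apply_prod F ℓ m hl hm x b c hc, Amat_apply_prod]
  have h2 : ∀ w ∈ Finset.univ, Amat F ℓ m g y w * Cmat F ℓ m x c w z
      = (∏ t, (if tau (y t) (w t) = g t then (1:F) else 0))
        * (∏ t, cloc F (decide (t ∈ c.1)) (decide (t ∈ c.2.1)) (decide (t ∈ c.2.2))
          (x t) (w t) (z t)) := fun w _ => by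
    rw [Cmat_apply_prod F ℓ m hl hm x b c hc, Amat_apply_prod]
  rw [Finset.sum_congr rfl h1, Finset.sum_congr rfl h2]
  have e1 := mul_apply_prodloc F ℓ m
    (fun t p q => cloc F (decide (t ∈ c.1)) (decide (t ∈ c.2.1)) (decide (t ∈ c.2.2)) (x t) p q)
    (fun t p q => if tau p q = g t then (1:F) else 0) y z
  have e2 := mul_apply_prodloc F ℓ m
    (fun t p q => if tau p q = g t then (1:F) else 0)
    (fun t p q => cloc F (decide (t ∈ c.1)) (decide (t ∈ c.2.1)) (decide (t ∈ c.2.2)) (x t) p q)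
    y z
  refine e1.trans (Eq.trans ?_ e2.symm)
  apply Finset.prod_congr rfl
  intro t _
  obtain ⟨hf1, hf2, hf23, hf13⟩ := MemU_flags ℓ m b c hc t
  exact cloc_mul_tau F _ _ _ (by simpa using hf23) (g t) (x t) (y t) (z t)

lemma Cmat_commute_Estar (hl : ∀ i, 2 ≤ ℓ i) (hm : ∀ i, 2 ≤ m i) (x : Pt ℓ m) (b : Lbl n)
    (c : Trip n) (hc : MemU ℓ m b b c) (g : Lbl n) :
    Cmat F ℓ m x c * Estar F ℓ m x g = Estar F ℓ m x g * Cmat F ℓ m x c := by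
  ext y z
  rw [show Estar F ℓ m x g = Matrix.diagonal (fun y => if Rel ℓ m g x y then (1:F) else 0)
    from rfl, Matrix.mul_diagonal, Matrix.diagonal_mul]
  by_cases hC : Cmat F ℓ m x c y z = 0
  · rw [hC, zero_mul, mul_zero]
  · have htt : ∀ t, tau (x t) (y t) = tau (x t) (z t) := by
      intro t
      rw [Cmat_apply_prod F ℓ m hl hm x b c hc] at hC
      have := Finset.prod_ne_zero_iff.1 hC t (Finset.mem_univ t)
      exact cloc_nonzero_types F _ _ _ _ _ _ this
    have hiff : Rel ℓ m g x y ↔ Rel ℓ m g x z := by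
      rw [Rel_iff, Rel_iff]
      exact forall_congr' fun t => by rw [htt t]
    by_cases hR : Rel ℓ m g x z
    · rw [if_pos hR, if_pos (hiff.2 hR), mul_one, one_mul]
    · rw [if_neg hR, if_neg (fun hh => hR (hiff.1 hh)), mul_zero, zero_mul]

lemma Cmat_mem_Talg (x : Pt ℓ m) (c : Trip n) : Cmat F ℓ m x c ∈ Talg F ℓ m x := by
  apply Subalgebra.sum_mem
  intro i _
  apply Subalgebra.smul_mem
  apply Subalgebra.sum_mem
  intro a _
  have hA : Amat F ℓ m a ∈ Talg F ℓ m x :=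
    Algebra.subset_adjoin (Set.mem_union_left _ (Set.mem_range_self a))
  have hE : ∀ g, Estar F ℓ m x g ∈ Talg F ℓ m x := fun g =>
    Algebra.subset_adjoin (Set.mem_union_right _ (Set.mem_range_self g))
  exact mul_mem (mul_mem (hE i) hA) (hE i)

lemma Cmat_ne_zero (hl : ∀ i, 2 ≤ ℓ i) (hm : ∀ i, 2 ≤ m i) (x : Pt ℓ m) (b : Lbl n)
    (c : Trip n) (hc : MemU ℓ m b b c) : Cmat F ℓ m x c ≠ 0 := by
  intro h0
  choose y hy using fun t =>
    cloc_diag_one F (decide (t ∈ c.1)) (decide (t ∈ c.2.1)) (decide (t ∈ c.2.2))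
      (hl t) (hm t) (x t)
  have h1 : Cmat F ℓ m x c y y = 1 := by
    rw [Cmat_apply_prod F ℓ m hl hm x b c hc]
    exact Finset.prod_eq_one fun t _ => hy t
  rw [h0] at h1
  exact one_ne_zero h1.symm

lemma Cmat_commute_all (hl : ∀ i, 2 ≤ ℓ i) (hm : ∀ i, 2 ≤ m i) (x : Pt ℓ m) (b : Lbl n)
    (c : Trip n) (hc : MemU ℓ m b b c) :
    ∀ N ∈ Talg F ℓ m x, Cmat F ℓ m x c * N = N * Cmat F ℓ m x c := by
  intro N hN
  induction hN using Algebra.adjoin_induction with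
  | mem N hgen =>
    rcases hgen with ⟨g, rfl⟩ | ⟨g, rfl⟩
    · exact Cmat_commute_Amat F ℓ m hl hm x b c hc g
    · exact Cmat_commute_Estar F ℓ m hl hm x b c hc g
  | algebraMap r => exact (Algebra.commutes r (Cmat F ℓ m x c)).symm
  | add p q hp hq hp' hq' => rw [mul_add, add_mul, hp', hq']
  | mul p q hp hq hp' hq' => rw [← mul_assoc, hp', mul_assoc, hq', mul_assoc]

lemma central_sq_zero {R : Type*} [CommRing R] [IsSemisimpleRing R] (z : R)
    (h : z * z = 0) : z = 0 := by
  obtain ⟨e, he, hspan⟩ := IsSemisimpleRing.ideal_eq_span_idempotent (Ideal.span {z})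
  have hez : e ∈ Ideal.span {z} := by
    rw [hspan]
    exact Ideal.subset_span rfl
  obtain ⟨r, hr⟩ := Ideal.mem_span_singleton'.1 hez
  have he0 : e = 0 := by
    have h2 : e * e = 0 := by
      rw [← hr, show r * z * (r * z) = r * r * (z * z) from by ring, h, mul_zero]
    rw [← he, h2]
  have hz : z ∈ Ideal.span {e} := by
    rw [← hspan]
    exact Ideal.subset_span rfl
  rw [he0, Ideal.span_singleton_eq_bot.2 rfl] at hz
  exact (Ideal.mem_bot).1 hz

end globalLemmas



/-- `C_𝔥 · C_𝔥 = k_𝔥 • C_𝔥`; in particular if the center `Z(T)` is a semisimple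
ring then no `k_𝔧` (for `𝔧 ∈ U_{i,i}`, `i ∈ E`) vanishes in `F`. -/
theorem statement7 (F : Type) [Field F] (n : ℕ) (hn : 1 ≤ n) (ℓ m : Fin n → ℕ)
    (hℓ : ∀ i, 2 ≤ ℓ i) (hm : ∀ i, 2 ≤ m i) (x : Pt ℓ m) :
    (∀ (b : Lbl n) (c : Trip n), MemU ℓ m b b c →
      Cmat F ℓ m x c * Cmat F ℓ m x c = (kTrip ℓ m c : F) • Cmat F ℓ m x c) ∧
    (IsSemisimpleRing ↥(Subalgebra.center F ↥(Talg F ℓ m x)) →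
      ∀ (i : Lbl n) (j : Trip n), MemU ℓ m i i j → (kTrip ℓ m j : F) ≠ 0) := by
  constructor
  · intro b c hc
    exact Cmat_mul_Cmat F ℓ m hℓ hm x b c hc
  · intro hss i j hij hk0
    haveI := hss
    have hmem : Cmat F ℓ m x j ∈ Talg F ℓ m x := Cmat_mem_Talg F ℓ m x j
    have hcomm : ∀ N ∈ Talg F ℓ m x, Cmat F ℓ m x j * N = N * Cmat F ℓ m x j :=
      Cmat_commute_all F ℓ m hℓ hm x i j hij
    have hCC : Cmat F ℓ m x j * Cmat F ℓ m x j = 0 := by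
      rw [Cmat_mul_Cmat F ℓ m hℓ hm x i j hij, hk0, zero_smul]
    have hcT : (⟨Cmat F ℓ m x j, hmem⟩ : ↥(Talg F ℓ m x)) ∈ Subalgebra.center F ↥(Talg F ℓ m x) :=
      Subalgebra.mem_center_iff.2 fun b => Subtype.ext ((hcomm b.1 b.2).symm)
    have hz2 : (⟨⟨Cmat F ℓ m x j, hmem⟩, hcT⟩ : ↥(Subalgebra.center F ↥(Talg F ℓ m x)))
        * ⟨⟨Cmat F ℓ m x j, hmem⟩, hcT⟩ = 0 := by
      apply Subtype.ext
      apply Subtype.ext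
      exact hCC
    have hz0 := @central_sq_zero ↥(Subalgebra.center F ↥(Talg F ℓ m x)) _ hss _ hz2
    have hC0 : Cmat F ℓ m x j = 0 :=
      congrArg (fun w : ↥(Subalgebra.center F ↥(Talg F ℓ m x)) => ((w : ↥(Talg F ℓ m x)) :
        Matrix (Pt ℓ m) (Pt ℓ m) F)) hz0
    exact Cmat_ne_zero F ℓ m hℓ hm x i j hij hC0


end GDScheme
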